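/- There exists a constant C > 0 (independent of δ_s, δ_φ and the grids) such that ‖R_{δ_s,δ_φ} − R_{δ_s}‖ ≤ C · δ_φ / δ_s, where the norm is the operator norm L²(Ω) → L²(Ω'). (The proof yields C = √(2π/3).) -/

import Mathlib

open MeasureTheory Real Set Filter

noncomputable section

/-- The unit direction vector `θ(φ) = (cos φ, sin φ)`. -/
def dirv (φ : ℝ) : ℝ × ℝ := (Real.cos φ, Real.sin φ)

/-- The perpendicular direction `θ(φ)^⊥ = (−sin φ, cos φ)`. -/
def dirp (φ : ℝ) : ℝ × ℝ := (-Real.sin φ, Real.cos φ)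

/-- Euclidean inner product on `ℝ²`. -/
def dot2 (x y : ℝ × ℝ) : ℝ := x.1 * y.1 + x.2 * y.2

/-- The open unit disk `Ω = B(0,1) ⊂ ℝ²`. -/
def unitDisk : Set (ℝ × ℝ) := {x : ℝ × ℝ | x.1 ^ 2 + x.2 ^ 2 < 1}

/-- The Radon transform `[R f](s,φ) = ∫ f(s θ(φ) + t θ(φ)^⊥) dt`. -/
def Radon (f : ℝ × ℝ → ℝ) (s φ : ℝ) : ℝ := ∫ t : ℝ, f (s • dirv φ + t • dirp φ)

/-- The backprojection `[R* g](x) = ∫_{S¹} g(x·θ(φ), φ) dφ`. -/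
def Backproj (g : ℝ → ℝ → ℝ) (x : ℝ × ℝ) : ℝ := ∫ φ in Ioc (-π) π, g (dot2 x (dirv φ)) φ

/-- `L²` norm of an image on the plane (for images supported in the unit disk,
this is the `L²(Ω)` norm). -/
def nImg (f : ℝ × ℝ → ℝ) : ℝ := (∫ x : ℝ × ℝ, f x ^ 2) ^ (1/2 : ℝ)

/-- `L²(Ω)` norm of an image restricted to the unit disk. -/
def nImgD (f : ℝ × ℝ → ℝ) : ℝ := (∫ x in unitDisk, f x ^ 2) ^ (1/2 : ℝ)

/-- `L²(ℝ × S¹)` norm of a sinogram. -/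
def nSino (g : ℝ → ℝ → ℝ) : ℝ := (∫ φ in Ioc (-π) π, ∫ s : ℝ, g s φ ^ 2) ^ (1/2 : ℝ)

/-- `L²(Ω')` norm, `Ω' = (−1,1) × S¹`. -/
def nSinoD (g : ℝ → ℝ → ℝ) : ℝ :=
  (∫ φ in Ioc (-π) π, ∫ s in Ioo (-1 : ℝ) 1, g s φ ^ 2) ^ (1/2 : ℝ)

/-- `L²` modulus of continuity of a sinogram: offset shift `h`, angular shift `γ`. -/
def modCont (g : ℝ → ℝ → ℝ) (h γ : ℝ) : ℝ :=
  (∫ φ in Ioc (-π) π, ∫ s : ℝ, (g (s + h) (φ + γ) - g s φ) ^ 2) ^ (1/2 : ℝ)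

/-- `sup_{|h| < r} ω_g(h, 0)`. -/
def supMod (g : ℝ → ℝ → ℝ) (r : ℝ) : ℝ :=
  sSup ((fun h => modCont g h 0) '' Ioo (-r) r)

/-- `f` vanishes outside the unit disk. -/
def SuppDisk (f : ℝ × ℝ → ℝ) : Prop := ∀ x, x ∉ unitDisk → f x = 0

/-- `g` vanishes for offsets outside `(−1, 1)`. -/
def SuppSino (g : ℝ → ℝ → ℝ) : Prop := ∀ s φ, s ∉ Ioo (-1 : ℝ) 1 → g s φ = 0

/-- `g` is `2π`-periodic in the angular variable, i.e. a function on `ℝ × S¹`. -/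
def PeriodicSino (g : ℝ → ℝ → ℝ) : Prop := ∀ s φ, g s (φ + 2 * π) = g s φ

/-- `f ∈ L²(ℝ²)`. -/
def L2Img (f : ℝ × ℝ → ℝ) : Prop := MemLp f 2 (volume : Measure (ℝ × ℝ))

/-- `g ∈ L²(ℝ × S¹)`. -/
def L2Sino (g : ℝ → ℝ → ℝ) : Prop :=
  MemLp (fun z : ℝ × ℝ => g z.1 z.2) 2
    ((volume : Measure (ℝ × ℝ)).restrict (univ ×ˢ Ioc (-π) π))

/-- The hat profile `w_δ(t) = max(0, δ − |t|)`. -/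
def hatw (δ t : ℝ) : ℝ := max 0 (δ - |t|)

/-- Detector centers `s_p = δ_s (p − (P+1)/2)`. -/
def sCen (δs : ℝ) (P p : ℕ) : ℝ := δs * ((p : ℝ) - ((P : ℝ) + 1) / 2)

/-- Detector cells `S_p = s_p + [−δ_s/2, δ_s/2)`. -/
def sCell (δs : ℝ) (P p : ℕ) : Set ℝ := Ico (sCen δs P p - δs / 2) (sCen δs P p + δs / 2)

/-- The detector cells cover `(−1, 1)`. -/
def CoversI (δs : ℝ) (P : ℕ) : Prop := Ioo (-1 : ℝ) 1 ⊆ ⋃ p ∈ Finset.Icc 1 P, sCell δs P p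

/-- Offset-discretized Radon transform `R_{δ_s}`. -/
def RadonS (δs : ℝ) (P : ℕ) (f : ℝ × ℝ → ℝ) (s φ : ℝ) : ℝ :=
  (δs ^ 2)⁻¹ * ∑ p ∈ Finset.Icc 1 P,
    Set.indicator (sCell δs P p) (fun _ => (1 : ℝ)) s *
      ∫ t : ℝ, hatw δs (t - sCen δs P p) * Radon f t φ

/-- The adjoint of `R_{δ_s}`. -/
def RadonSStar (δs : ℝ) (P : ℕ) (g : ℝ → ℝ → ℝ) (x : ℝ × ℝ) : ℝ :=
  (δs ^ 2)⁻¹ * ∑ p ∈ Finset.Icc 1 P,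
    ∫ φ in Ioc (-π) π,
      hatw δs (dot2 x (dirv φ) - sCen δs P p) * ∫ s in sCell δs P p, g s φ

/-- A valid full angular grid `φ_1 < … < φ_Q` in `[−π, π)` with the wrap-around
conventions `φ_0 = φ_Q − 2π` and `φ_{Q+1} = φ_1 + 2π`. -/
structure AngGrid (Q : ℕ) (φs : ℕ → ℝ) : Prop where
  one_le : 1 ≤ Q
  mono : ∀ q, 1 ≤ q → q < Q → φs q < φs (q + 1)
  mem : ∀ q, 1 ≤ q → q ≤ Q → φs q ∈ Ico (-π) π
  wrap0 : φs 0 = φs Q - 2 * π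
  wrapQ : φs (Q + 1) = φs 1 + 2 * π

/-- `δφ` bounds all angular gaps of the grid (it holds for `δφ` the maximal gap). -/
def GapLe (Q : ℕ) (φs : ℕ → ℝ) (δφ : ℝ) : Prop :=
  ∀ q, 1 ≤ q → q ≤ Q → φs (q + 1) - φs q ≤ δφ

/-- The angular cell `Θ_q`, taken modulo `2π`. -/
def angCell (φs : ℕ → ℝ) (q : ℕ) : Set ℝ :=
  {φ : ℝ | ∃ k : ℤ, φ + 2 * π * (k : ℝ) ∈
    Ico ((φs (q - 1) + φs q) / 2) ((φs q + φs (q + 1)) / 2)}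

/-- Offset- and angle-discretized Radon transform `R_{δ_s, δ_φ}`. -/
def RadonSA (δs : ℝ) (P Q : ℕ) (φs : ℕ → ℝ) (f : ℝ × ℝ → ℝ) (s φ : ℝ) : ℝ :=
  (δs ^ 2)⁻¹ * ∑ q ∈ Finset.Icc 1 Q, ∑ p ∈ Finset.Icc 1 P,
    Set.indicator (sCell δs P p) (fun _ => (1 : ℝ)) s *
    Set.indicator (angCell φs q) (fun _ => (1 : ℝ)) φ *
    ∫ x in unitDisk, hatw δs (dot2 x (dirv (φs q)) - sCen δs P p) * f x

/-- Pixel centers `x_{ij}`. -/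
def pixCen (δx : ℝ) (N M i j : ℕ) : ℝ × ℝ :=
  (δx * ((i : ℝ) - ((N : ℝ) + 1) / 2), δx * ((j : ℝ) - ((M : ℝ) + 1) / 2))

/-- Pixels `X_{ij} = x_{ij} + [−δ_x/2, δ_x/2)²`. -/
def pixCell (δx : ℝ) (N M i j : ℕ) : Set (ℝ × ℝ) :=
  Ico ((pixCen δx N M i j).1 - δx / 2) ((pixCen δx N M i j).1 + δx / 2) ×ˢ
    Ico ((pixCen δx N M i j).2 - δx / 2) ((pixCen δx N M i j).2 + δx / 2)

/-- The pixels cover the unit disk. -/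
def CoversDisk (δx : ℝ) (N M : ℕ) : Prop :=
  unitDisk ⊆ ⋃ i ∈ Finset.Icc 1 N, ⋃ j ∈ Finset.Icc 1 M, pixCell δx N M i j

/-- The fully discrete (pixel-driven) Radon transform `R^{δ_x}_{δ_s, δ_φ}`. -/
def RadonFull (δs : ℝ) (P Q : ℕ) (φs : ℕ → ℝ) (δx : ℝ) (N M : ℕ)
    (f : ℝ × ℝ → ℝ) (s φ : ℝ) : ℝ :=
  (δs ^ 2)⁻¹ * ∑ q ∈ Finset.Icc 1 Q, ∑ p ∈ Finset.Icc 1 P,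
    Set.indicator (sCell δs P p) (fun _ => (1 : ℝ)) s *
    Set.indicator (angCell φs q) (fun _ => (1 : ℝ)) φ *
    ∑ i ∈ Finset.Icc 1 N, ∑ j ∈ Finset.Icc 1 M,
      hatw δs (dot2 (pixCen δx N M i j) (dirv (φs q)) - sCen δs P p) *
        ∫ x in pixCell δx N M i j, f x

/-- The adjoint of the fully discrete Radon transform (pixel-driven backprojection). -/
def RadonFullStar (δs : ℝ) (P Q : ℕ) (φs : ℕ → ℝ) (δx : ℝ) (N M : ℕ)
    (g : ℝ → ℝ → ℝ) (x : ℝ × ℝ) : ℝ :=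
  ∑ i ∈ Finset.Icc 1 N, ∑ j ∈ Finset.Icc 1 M,
    Set.indicator (pixCell δx N M i j) (fun _ => (1 : ℝ)) x *
    ((δs ^ 2)⁻¹ * ∑ q ∈ Finset.Icc 1 Q, ∑ p ∈ Finset.Icc 1 P,
      hatw δs (dot2 (pixCen δx N M i j) (dirv (φs q)) - sCen δs P p) *
        ∫ φ in Ico ((φs (q - 1) + φs q) / 2) ((φs q + φs (q + 1)) / 2),
          ∫ s in sCell δs P p, g s φ)

/- ---------- sparse / limited angle ---------- -/

/-- Limited-angle angular grid on `A = (φ_1, φ_Q)` with `φ_0 = φ_1`, `φ_{Q+1} = φ_Q`. -/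
structure AngGridA (Q : ℕ) (φs : ℕ → ℝ) : Prop where
  two_le : 2 ≤ Q
  mono : ∀ q, 1 ≤ q → q < Q → φs q < φs (q + 1)
  mem : ∀ q, 1 ≤ q → q ≤ Q → φs q ∈ Ico (-π) π
  wrap0 : φs 0 = φs 1
  wrapQ : φs (Q + 1) = φs Q

/-- `L²(Ω'_A)` norm, `Ω'_A = (−1,1) × A` with `A = (a,b)`. -/
def nSinoA (a b : ℝ) (g : ℝ → ℝ → ℝ) : ℝ :=
  (∫ φ in Ioo a b, ∫ s in Ioo (-1 : ℝ) 1, g s φ ^ 2) ^ (1/2 : ℝ)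

/-- Limited-angle backprojection `(R^A)*`. -/
def BackprojA (a b : ℝ) (g : ℝ → ℝ → ℝ) (x : ℝ × ℝ) : ℝ :=
  ∫ φ in Ioo a b, g (dot2 x (dirv φ)) φ

/-- `g ∈ L²((−1,1) × A)` (as a function on `ℝ × A`). -/
def L2SinoA (a b : ℝ) (g : ℝ → ℝ → ℝ) : Prop :=
  MemLp (fun z : ℝ × ℝ => g z.1 z.2) 2
    ((volume : Measure (ℝ × ℝ)).restrict (univ ×ˢ Ioo a b))

/-- limited-angle modulus of continuity `ω_g(h, 0)` on `ℝ × A`. -/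
def modContA (a b : ℝ) (g : ℝ → ℝ → ℝ) (h : ℝ) : ℝ :=
  (∫ φ in Ioo a b, ∫ s : ℝ, (g (s + h) φ - g s φ) ^ 2) ^ (1/2 : ℝ)

/-- Sparse-angle `L²(Ω'_F)` norm (counting measure in the angular direction). -/
def nSinoF (Q : ℕ) (φs : ℕ → ℝ) (g : ℝ → ℝ → ℝ) : ℝ :=
  (∑ q ∈ Finset.Icc 1 Q, ∫ s in Ioo (-1 : ℝ) 1, g s (φs q) ^ 2) ^ (1/2 : ℝ)

/-- Sparse-angle modulus of continuity `ω_g(h, 0)`. -/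
def modContF (Q : ℕ) (φs : ℕ → ℝ) (g : ℝ → ℝ → ℝ) (h : ℝ) : ℝ :=
  (∑ q ∈ Finset.Icc 1 Q, ∫ s : ℝ, (g (s + h) (φs q) - g s (φs q)) ^ 2) ^ (1/2 : ℝ)

/-- Sparse-angle backprojection `(R^F)* g (x) = Σ_q g(x·θ_q, φ_q)`. -/
def BackprojF (Q : ℕ) (φs : ℕ → ℝ) (g : ℝ → ℝ → ℝ) (x : ℝ × ℝ) : ℝ :=
  ∑ q ∈ Finset.Icc 1 Q, g (dot2 x (dirv (φs q))) (φs q)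

/-- The discrete sparse-angle Radon transform at a single angle `θang`. -/
def RadonSparse (δs : ℝ) (P : ℕ) (δx : ℝ) (N M : ℕ) (θang : ℝ)
    (f : ℝ × ℝ → ℝ) (s : ℝ) : ℝ :=
  (δs ^ 2)⁻¹ * ∑ p ∈ Finset.Icc 1 P,
    Set.indicator (sCell δs P p) (fun _ => (1 : ℝ)) s *
    ∑ i ∈ Finset.Icc 1 N, ∑ j ∈ Finset.Icc 1 M,
      hatw δs (dot2 (pixCen δx N M i j) (dirv θang) - sCen δs P p) *
        ∫ x in pixCell δx N M i j, f x

/-- Adjoint of the discrete sparse-angle Radon transform. -/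
def RadonSparseStar (δs : ℝ) (P : ℕ) (δx : ℝ) (N M Q : ℕ) (φs : ℕ → ℝ)
    (g : ℝ → ℝ → ℝ) (x : ℝ × ℝ) : ℝ :=
  ∑ i ∈ Finset.Icc 1 N, ∑ j ∈ Finset.Icc 1 M,
    Set.indicator (pixCell δx N M i j) (fun _ => (1 : ℝ)) x *
    ((δs ^ 2)⁻¹ * ∑ q ∈ Finset.Icc 1 Q, ∑ p ∈ Finset.Icc 1 P,
      hatw δs (dot2 (pixCen δx N M i j) (dirv (φs q)) - sCen δs P p) *
        ∫ s in sCell δs P p, g s (φs q))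

/- ---------- fanbeam ---------- -/

/-- Detector width `W = 2R/√(R_E² − 1)`. -/
def Wfan (RE R : ℝ) : ℝ := 2 * R / Real.sqrt (RE ^ 2 - 1)

/-- The fanbeam transform `F`. -/
def Fanbeam (RE R : ℝ) (f : ℝ × ℝ → ℝ) (ξ α : ℝ) : ℝ :=
  Real.sqrt (ξ ^ 2 + R ^ 2) *
    ∫ t : ℝ, f (t • (ξ • dirv α + R • dirp α) - RE • dirp α)

/-- The unweighted fanbeam transform `G`. -/
def GFan (RE R : ℝ) (f : ℝ × ℝ → ℝ) (ξ α : ℝ) : ℝ :=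
  ∫ t : ℝ, f (t • (ξ • dirv α + R • dirp α) - RE • dirp α)

/-- Fan projection coordinate `ξ(x, α) = x·θ(α) R / (x·θ(α)^⊥ + R_E)`. -/
def fanProj (RE R : ℝ) (x : ℝ × ℝ) (α : ℝ) : ℝ :=
  dot2 x (dirv α) * R / (dot2 x (dirp α) + RE)

/-- Adjoint `G*` of the unweighted fanbeam transform. -/
def GFanStar (RE R : ℝ) (g : ℝ → ℝ → ℝ) (x : ℝ × ℝ) : ℝ :=
  ∫ α in Ioc (-π) π, (dot2 x (dirp α) + RE)⁻¹ * g (fanProj RE R x α) α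

/-- Adjoint `F*` of the fanbeam transform. -/
def FanbeamStar (RE R : ℝ) (g : ℝ → ℝ → ℝ) (x : ℝ × ℝ) : ℝ :=
  ∫ α in Ioc (-π) π,
    Real.sqrt (fanProj RE R x α ^ 2 + R ^ 2) * (dot2 x (dirp α) + RE)⁻¹ *
      g (fanProj RE R x α) α

/-- `L²(Ω')` norm for the fanbeam geometry, `Ω' = (−W/2, W/2) × S¹`. -/
def nSinoW (RE R : ℝ) (g : ℝ → ℝ → ℝ) : ℝ :=
  (∫ α in Ioc (-π) π, ∫ ξ in Ioo (-(Wfan RE R) / 2) (Wfan RE R / 2), g ξ α ^ 2) ^ (1/2 : ℝ)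

/-- `g` vanishes for offsets outside `(−W/2, W/2)`. -/
def SuppSinoW (RE R : ℝ) (g : ℝ → ℝ → ℝ) : Prop :=
  ∀ ξ α, ξ ∉ Ioo (-(Wfan RE R) / 2) (Wfan RE R / 2) → g ξ α = 0

/-- `g ∈ L²((−W/2, W/2) × S¹)`. -/
def L2SinoW (RE R : ℝ) (g : ℝ → ℝ → ℝ) : Prop :=
  MemLp (fun z : ℝ × ℝ => g z.1 z.2) 2
    ((volume : Measure (ℝ × ℝ)).restrict
      (Ioo (-(Wfan RE R) / 2) (Wfan RE R / 2) ×ˢ Ioc (-π) π))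

/-- Offset-discretized unweighted fanbeam transform `G_{δ_ξ}`, `δ_ξ = W/P`. -/
def GFanS (RE R : ℝ) (P : ℕ) (f : ℝ × ℝ → ℝ) (ξ α : ℝ) : ℝ :=
  ((Wfan RE R / P) ^ 2)⁻¹ * ∑ p ∈ Finset.Icc 1 P,
    Set.indicator (sCell (Wfan RE R / P) P p) (fun _ => (1 : ℝ)) ξ *
      ∫ x in unitDisk,
        hatw (Wfan RE R / P) (fanProj RE R x α - sCen (Wfan RE R / P) P p) *
          f x / (dot2 x (dirp α) + RE)

/-- Adjoint of `G_{δ_ξ}`. -/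
def GFanSStar (RE R : ℝ) (P : ℕ) (g : ℝ → ℝ → ℝ) (x : ℝ × ℝ) : ℝ :=
  ((Wfan RE R / P) ^ 2)⁻¹ * ∑ p ∈ Finset.Icc 1 P,
    ∫ α in Ioc (-π) π,
      hatw (Wfan RE R / P) (fanProj RE R x α - sCen (Wfan RE R / P) P p) *
        (dot2 x (dirp α) + RE)⁻¹ *
        ∫ ξ in sCell (Wfan RE R / P) P p, g ξ α

/-- Offset- and angle-discretized `G_{δ_ξ, δ_α}`. -/
def GFanSA (RE R : ℝ) (P Q : ℕ) (αs : ℕ → ℝ) (f : ℝ × ℝ → ℝ) (ξ α : ℝ) : ℝ :=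
  ((Wfan RE R / P) ^ 2)⁻¹ * ∑ p ∈ Finset.Icc 1 P, ∑ q ∈ Finset.Icc 1 Q,
    Set.indicator (sCell (Wfan RE R / P) P p) (fun _ => (1 : ℝ)) ξ *
    Set.indicator (angCell αs q) (fun _ => (1 : ℝ)) α *
      ∫ x in unitDisk,
        hatw (Wfan RE R / P) (fanProj RE R x (αs q) - sCen (Wfan RE R / P) P p) *
          f x / (dot2 x (dirp (αs q)) + RE)

/-- Fully discrete unweighted fanbeam transform `G^{δ_x}_{δ_ξ, δ_α}`. -/
def GFanFull (RE R : ℝ) (P Q : ℕ) (αs : ℕ → ℝ) (δx : ℝ) (N M : ℕ)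
    (f : ℝ × ℝ → ℝ) (ξ α : ℝ) : ℝ :=
  ((Wfan RE R / P) ^ 2)⁻¹ * ∑ p ∈ Finset.Icc 1 P, ∑ q ∈ Finset.Icc 1 Q,
    Set.indicator (sCell (Wfan RE R / P) P p) (fun _ => (1 : ℝ)) ξ *
    Set.indicator (angCell αs q) (fun _ => (1 : ℝ)) α *
    ∑ i ∈ Finset.Icc 1 N, ∑ j ∈ Finset.Icc 1 M,
      hatw (Wfan RE R / P)
          (fanProj RE R (pixCen δx N M i j) (αs q) - sCen (Wfan RE R / P) P p) *
        (dot2 (pixCen δx N M i j) (dirp (αs q)) + RE)⁻¹ *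
        ∫ x in pixCell δx N M i j, f x

/-- Fully discrete pixel-driven fanbeam transform `F^{δ_x}_{δ_ξ, δ_α}`. -/
def FanFull (RE R : ℝ) (P Q : ℕ) (αs : ℕ → ℝ) (δx : ℝ) (N M : ℕ)
    (f : ℝ × ℝ → ℝ) (ξ α : ℝ) : ℝ :=
  ((Wfan RE R / P) ^ 2)⁻¹ * ∑ p ∈ Finset.Icc 1 P, ∑ q ∈ Finset.Icc 1 Q,
    Set.indicator (sCell (Wfan RE R / P) P p) (fun _ => (1 : ℝ)) ξ *
    Set.indicator (angCell αs q) (fun _ => (1 : ℝ)) α *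
    Real.sqrt (sCen (Wfan RE R / P) P p ^ 2 + R ^ 2) *
    ∑ i ∈ Finset.Icc 1 N, ∑ j ∈ Finset.Icc 1 M,
      hatw (Wfan RE R / P)
          (fanProj RE R (pixCen δx N M i j) (αs q) - sCen (Wfan RE R / P) P p) *
        (dot2 (pixCen δx N M i j) (dirp (αs q)) + RE)⁻¹ *
        ∫ x in pixCell δx N M i j, f x

/-- Adjoint of the fully discrete pixel-driven fanbeam transform. -/
def FanFullStar (RE R : ℝ) (P Q : ℕ) (αs : ℕ → ℝ) (δx : ℝ) (N M : ℕ)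
    (g : ℝ → ℝ → ℝ) (x : ℝ × ℝ) : ℝ :=
  ∑ i ∈ Finset.Icc 1 N, ∑ j ∈ Finset.Icc 1 M,
    Set.indicator (pixCell δx N M i j) (fun _ => (1 : ℝ)) x *
    (((Wfan RE R / P) ^ 2)⁻¹ * ∑ q ∈ Finset.Icc 1 Q, ∑ p ∈ Finset.Icc 1 P,
      hatw (Wfan RE R / P)
          (fanProj RE R (pixCen δx N M i j) (αs q) - sCen (Wfan RE R / P) P p) *
        Real.sqrt (sCen (Wfan RE R / P) P p ^ 2 + R ^ 2) *
        (dot2 (pixCen δx N M i j) (dirp (αs q)) + RE)⁻¹ *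
        ∫ α in Ico ((αs (q - 1) + αs q) / 2) ((αs q + αs (q + 1)) / 2),
          ∫ ξ in sCell (Wfan RE R / P) P p, g ξ α)

/-!
For a fixed view `φ`, the direction `θ(φ)` lies in exactly one angular cell `Θ_{q₀}`, so
`(R_{δs,δφ} f − R_{δs} f)(·, φ)` is `δs⁻²` times a step function in `s` whose values are differences
of detector readings `∫_Ω w_{δs}(x·θ − s_p) f(x) dx` taken at `θ = θ_{q₀}` and at `θ = θ(φ)`. On the
disk `|x·θ_{q₀} − x·θ(φ)| ≤ δφ / 2` and `w_{δs}` is `1`-Lipschitz, so such a difference is at most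
`δφ / 2` times the `L¹` norm of `f` on two strips of width `2 δs`; by Cauchy–Schwarz its square is
at most `2 δs δφ²` times `∫ f²` over these strips. A point lies in at most two strips of width
`2 δs` centred at the detector positions, so summing over the detectors and integrating in `s`
bounds the squared `L²` norm of the view by `8 (δφ / δs)² ‖f‖²`; integrating over the `2π` of
angles gives `C = 4 √π`.
-/

/-- The coordinates in which `R f(s, φ)` integrates along the second variable. -/
def planeRot (φ : ℝ) : (ℝ × ℝ) →ₗ[ℝ] ℝ × ℝ :=
  (LinearMap.fst ℝ ℝ ℝ).smulRight (dirv φ) + (LinearMap.snd ℝ ℝ ℝ).smulRight (dirp φ)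

theorem planeRot_apply (φ : ℝ) (p : ℝ × ℝ) : planeRot φ p = p.1 • dirv φ + p.2 • dirp φ := rfl

theorem det_planeRot (φ : ℝ) : LinearMap.det (planeRot φ) = 1 := by
  rw [← LinearMap.det_toMatrix (Module.Basis.finTwoProd ℝ), Matrix.det_fin_two]
  simp [LinearMap.toMatrix_apply, planeRot_apply, dirv, dirp, Module.Basis.finTwoProd,
    ← sq, Real.cos_sq_add_sin_sq]

theorem measurePreserving_planeRot (φ : ℝ) : MeasurePreserving (planeRot φ) volume volume := by
  refine ⟨(planeRot φ).continuous_of_finiteDimensional.measurable, ?_⟩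
  rw [Measure.map_linearMap_addHaar_eq_smul_addHaar _ (by simp [det_planeRot])]
  simp [det_planeRot]

theorem volume_image_planeRot (φ : ℝ) (s : Set (ℝ × ℝ)) : volume (planeRot φ '' s) = volume s := by
  simp [Measure.addHaar_image_linearMap, det_planeRot]

theorem integral_eq_integral_integral_planeRot {E : Type*} [NormedAddCommGroup E]
    [NormedSpace ℝ E] (φ : ℝ) {g : ℝ × ℝ → E} (hg : Integrable g) :
    ∫ x, g x = ∫ s : ℝ, ∫ t : ℝ, g (s • dirv φ + t • dirp φ) := by
  have hemb : MeasurableEmbedding (planeRot φ) :=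
    ((planeRot φ).equivOfDetNeZero (by simp [det_planeRot])).toContinuousLinearEquiv
      |>.toHomeomorph.measurableEmbedding
  rw [← (measurePreserving_planeRot φ).integral_comp hemb, Measure.volume_eq_prod,
    integral_prod]
  · rfl
  · rw [← Measure.volume_eq_prod]
    exact ((measurePreserving_planeRot φ).integrable_comp_emb hemb).2 hg

theorem dot2_smul_dirv_add_smul_dirp (φ s t : ℝ) : dot2 (s • dirv φ + t • dirp φ) (dirv φ) = s := by
  simp only [dot2, dirv, dirp, Prod.smul_mk, smul_eq_mul, Prod.mk_add_mk]
  linear_combination s * Real.sin_sq_add_cos_sq φ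

theorem planeRot_dot2 (φ : ℝ) (x : ℝ × ℝ) :
    planeRot φ (dot2 x (dirv φ), dot2 x (dirp φ)) = x := by
  simp only [planeRot_apply, dot2, dirv, dirp, Prod.smul_mk, smul_eq_mul, Prod.mk_add_mk,
    Prod.ext_iff]
  constructor
  · linear_combination x.1 * Real.sin_sq_add_cos_sq φ
  · linear_combination x.2 * Real.sin_sq_add_cos_sq φ

/-! The hat profile and the unit disk -/

theorem hatw_nonneg (δ t : ℝ) : 0 ≤ hatw δ t := le_max_left _ _

theorem hatw_le (δ t : ℝ) : hatw δ t ≤ max 0 δ :=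
  max_le_max le_rfl (sub_le_self _ (abs_nonneg t))

theorem hatw_eq_zero {δ t : ℝ} (h : δ ≤ |t|) : hatw δ t = 0 :=
  max_eq_left (sub_nonpos.2 h)

theorem abs_hatw_sub_hatw_le (δ a b : ℝ) : |hatw δ a - hatw δ b| ≤ |a - b| :=
  calc |hatw δ a - hatw δ b| ≤ |(δ - |a|) - (δ - |b|)| := by
        simpa only [hatw, max_comm (0 : ℝ)] using abs_max_sub_max_le_abs _ _ 0
    _ = |(|b| - |a|)| := by ring_nf
    _ ≤ |a - b| := by rw [abs_sub_comm a b]; exact abs_abs_sub_abs_le_abs_sub _ _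

theorem continuous_hatw (δ : ℝ) : Continuous (hatw δ) :=
  continuous_const.max (continuous_const.sub continuous_abs)

theorem continuous_dot2_left (v : ℝ × ℝ) : Continuous fun x : ℝ × ℝ => dot2 x v := by
  unfold dot2; fun_prop

theorem isOpen_unitDisk : IsOpen unitDisk :=
  isOpen_lt (by fun_prop) continuous_const

theorem measurableSet_unitDisk : MeasurableSet unitDisk := isOpen_unitDisk.measurableSet

theorem volume_unitDisk_lt_top : volume unitDisk < ⊤ := by
  refine ((Metric.isBounded_Ioo (-1 : ℝ) 1).prod (Metric.isBounded_Ioo (-1 : ℝ) 1)).subset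
    (fun x (hx : x.1 ^ 2 + x.2 ^ 2 < 1) => ?_) |>.measure_lt_top
  constructor <;> constructor <;> nlinarith [sq_nonneg x.1, sq_nonneg x.2]

theorem integrableOn_unitDisk {f : ℝ × ℝ → ℝ} (hf : L2Img f) : IntegrableOn f unitDisk := by
  have : IsFiniteMeasure (volume.restrict unitDisk) :=
    isFiniteMeasure_restrict.2 volume_unitDisk_lt_top.ne
  exact (hf.restrict unitDisk).integrable one_le_two

theorem integrable_of_suppDisk {f : ℝ × ℝ → ℝ} (hsupp : SuppDisk f) (hf : L2Img f) :
    Integrable f :=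
  (integrableOn_iff_integrable_of_support_subset fun x hx =>
    by_contra fun h => hx (hsupp x h)).1 (integrableOn_unitDisk hf)

theorem abs_dot2_dirv_sub_le {x : ℝ × ℝ} (hx : x ∈ unitDisk) (α β : ℝ) :
    |dot2 x (dirv α) - dot2 x (dirv β)| ≤ |α - β| := by
  have hx : x.1 ^ 2 + x.2 ^ 2 < 1 := hx
  have hchord : (Real.cos α - Real.cos β) ^ 2 + (Real.sin α - Real.sin β) ^ 2 ≤ (α - β) ^ 2 := by
    nlinarith [Real.cos_sub α β, Real.sin_sq_add_cos_sq α, Real.sin_sq_add_cos_sq β,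
      Real.one_sub_sq_div_two_le_cos (x := α - β)]
  have hcs : (dot2 x (dirv α) - dot2 x (dirv β)) ^ 2 ≤
      (x.1 ^ 2 + x.2 ^ 2) * ((Real.cos α - Real.cos β) ^ 2 + (Real.sin α - Real.sin β) ^ 2) := by
    simp only [dot2, dirv]
    nlinarith [sq_nonneg (x.1 * (Real.sin α - Real.sin β) - x.2 * (Real.cos α - Real.cos β))]
  refine sq_le_sq.1 ?_
  nlinarith [sq_nonneg (Real.cos α - Real.cos β), sq_nonneg (Real.sin α - Real.sin β)]

/-! Detector readings -/

/-- Fubini in the rotated coordinates `planeRot φ`. -/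
theorem integral_mul_radon {f : ℝ × ℝ → ℝ} (hf : Integrable f) {w : ℝ → ℝ}
    (hw : Continuous w) {C : ℝ} (hwC : ∀ t, |w t| ≤ C) (φ : ℝ) :
    ∫ t, w t * Radon f t φ = ∫ x, w (dot2 x (dirv φ)) * f x := by
  have hint : Integrable fun x => w (dot2 x (dirv φ)) * f x :=
    hf.bdd_mul (hw.comp (continuous_dot2_left _)).aestronglyMeasurable
      (Eventually.of_forall fun x => hwC _)
  rw [integral_eq_integral_integral_planeRot φ hint]
  refine integral_congr_ae (Eventually.of_forall fun s => ?_)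
  simp only [dot2_smul_dirv_add_smul_dirp, integral_const_mul, Radon]

/-- The reading of a detector centred at `c` for the view angle `α`. -/
def hatMoment (δ : ℝ) (f : ℝ × ℝ → ℝ) (α c : ℝ) : ℝ :=
  ∫ x in unitDisk, hatw δ (dot2 x (dirv α) - c) * f x

theorem integrableOn_hatw_mul {f : ℝ × ℝ → ℝ} {s : Set (ℝ × ℝ)} (hf : IntegrableOn f s)
    (δ α c : ℝ) : IntegrableOn (fun x => hatw δ (dot2 x (dirv α) - c) * f x) s :=
  hf.bdd_mul (((continuous_hatw δ).comp
      ((continuous_dot2_left _).sub continuous_const)).aestronglyMeasurable)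
    (Eventually.of_forall fun x => by
      rw [Real.norm_of_nonneg (hatw_nonneg _ _)]; exact hatw_le _ _)

theorem radonS_eq_sum_hatMoment {f : ℝ × ℝ → ℝ} (hsupp : SuppDisk f) (hf : L2Img f)
    (δs : ℝ) (P : ℕ) (s φ : ℝ) :
    RadonS δs P f s φ = (δs ^ 2)⁻¹ * ∑ p ∈ Finset.Icc 1 P,
      Set.indicator (sCell δs P p) (fun _ => (1 : ℝ)) s * hatMoment δs f φ (sCen δs P p) := by
  unfold RadonS hatMoment
  congr 1
  refine Finset.sum_congr rfl fun p _ => ?_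
  rw [integral_mul_radon (w := fun t => hatw δs (t - sCen δs P p))
      (integrable_of_suppDisk hsupp hf) ((continuous_hatw δs).comp (by fun_prop))
      (fun t => by rw [abs_of_nonneg (hatw_nonneg _ _)]; exact hatw_le _ _),
    setIntegral_eq_integral_of_forall_compl_eq_zero fun x hx => by simp [hsupp x hx]]

theorem radonSA_eq_sum_hatMoment {δs : ℝ} {P Q : ℕ} {φs : ℕ → ℝ} {q₀ : ℕ} {φ : ℝ}
    (hq₀ : q₀ ∈ Finset.Icc 1 Q) (hmem : φ ∈ angCell φs q₀)
    (huniq : ∀ q ∈ Finset.Icc 1 Q, φ ∈ angCell φs q → q = q₀) (f : ℝ × ℝ → ℝ) (s : ℝ) :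
    RadonSA δs P Q φs f s φ = (δs ^ 2)⁻¹ * ∑ p ∈ Finset.Icc 1 P,
      Set.indicator (sCell δs P p) (fun _ => (1 : ℝ)) s * hatMoment δs f (φs q₀) (sCen δs P p) := by
  unfold RadonSA
  rw [Finset.sum_eq_single_of_mem q₀ hq₀ fun q hq hne => Finset.sum_eq_zero fun p _ => by
    rw [Set.indicator_of_notMem fun h => hne (huniq q hq h)]; ring]
  simp [Set.indicator_of_mem hmem, hatMoment]

/-! Strips of the disk -/

/-- The part of the unit disk on which `x ↦ w_r(x·θ(α) − c)` is nonzero. -/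
def diskStrip (α c r : ℝ) : Set (ℝ × ℝ) := {x | x ∈ unitDisk ∧ |dot2 x (dirv α) - c| < r}

theorem diskStrip_subset_unitDisk (α c r : ℝ) : diskStrip α c r ⊆ unitDisk := fun _ hx => hx.1

theorem measurableSet_diskStrip (α c r : ℝ) : MeasurableSet (diskStrip α c r) :=
  measurableSet_unitDisk.inter
    (isOpen_lt (((continuous_dot2_left _).sub continuous_const).abs) continuous_const).measurableSet

theorem volume_diskStrip_le (α c : ℝ) {r : ℝ} (hr : 0 ≤ r) :
    volume (diskStrip α c r) ≤ ENNReal.ofReal (4 * r) := by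
  have hsub : diskStrip α c r ⊆ planeRot α '' (Ioo (c - r) (c + r) ×ˢ Ioo (-1 : ℝ) 1) := by
    rintro x ⟨hx, hxc⟩
    have hx : x.1 ^ 2 + x.2 ^ 2 < 1 := hx
    refine ⟨(dot2 x (dirv α), dot2 x (dirp α)), ⟨?_, ?_⟩, planeRot_dot2 α x⟩
    · constructor <;> linarith [abs_lt.1 hxc]
    · have : dot2 x (dirp α) ^ 2 < 1 := by
        simp only [dot2, dirp]
        nlinarith [Real.sin_sq_add_cos_sq α, sq_nonneg (x.1 * Real.cos α + x.2 * Real.sin α)]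
      constructor <;> nlinarith
  calc volume (diskStrip α c r)
      ≤ volume (planeRot α '' (Ioo (c - r) (c + r) ×ˢ Ioo (-1 : ℝ) 1)) := measure_mono hsub
    _ = ENNReal.ofReal (4 * r) := by
      rw [volume_image_planeRot, Measure.volume_eq_prod, Measure.prod_prod, Real.volume_Ioo,
        Real.volume_Ioo, ← ENNReal.ofReal_mul (by linarith)]
      ring_nf

/-- Cauchy–Schwarz against the constant `1`. -/
theorem sq_setIntegral_abs_le {α : Type*} [MeasurableSpace α] {μ : Measure α} {s : Set α}
    (hs : μ s ≠ ⊤) {f : α → ℝ} (hf : MemLp f 2 μ) :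
    (∫ x in s, |f x| ∂μ) ^ 2 ≤ μ.real s * ∫ x in s, f x ^ 2 ∂μ := by
  have : IsFiniteMeasure (μ.restrict s) := isFiniteMeasure_restrict.2 hs
  have h := integral_mul_norm_le_Lp_mul_Lq (μ := μ.restrict s) Real.HolderConjugate.two_two
    (f := f) (g := fun _ => (1 : ℝ)) (by simpa using hf.restrict s) (by simpa using memLp_const 1)
  simp only [norm_one, mul_one, one_pow, integral_const, smul_eq_mul,
    measureReal_restrict_apply_univ, Real.norm_eq_abs, Real.rpow_two, sq_abs,
    ← Real.sqrt_eq_rpow] at h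
  calc (∫ x in s, |f x| ∂μ) ^ 2 ≤ (√(∫ x in s, f x ^ 2 ∂μ) * √(μ.real s)) ^ 2 :=
        pow_le_pow_left₀ (integral_nonneg fun _ => abs_nonneg _) h 2
    _ = μ.real s * ∫ x in s, f x ^ 2 ∂μ := by
        rw [mul_pow, Real.sq_sqrt (integral_nonneg fun _ => sq_nonneg _),
          Real.sq_sqrt measureReal_nonneg, mul_comm]

theorem abs_hatw_sub_hatw_le_indicator {x : ℝ × ℝ} (hx : x ∈ unitDisk) (δ α β c : ℝ) :
    |hatw δ (dot2 x (dirv α) - c) - hatw δ (dot2 x (dirv β) - c)| ≤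
      |α - β| * ((diskStrip α c δ).indicator 1 x + (diskStrip β c δ).indicator 1 x) := by
  have h0 (γ : ℝ) : 0 ≤ (diskStrip γ c δ).indicator (1 : ℝ × ℝ → ℝ) x :=
    Set.indicator_nonneg (fun _ _ => zero_le_one) x
  by_cases hxs : x ∈ diskStrip α c δ ∨ x ∈ diskStrip β c δ
  · have hone : (1 : ℝ) ≤ (diskStrip α c δ).indicator 1 x + (diskStrip β c δ).indicator 1 x := by
      rcases hxs with h | h <;> simp [Set.indicator_of_mem h, h0]
    calc _ ≤ |(dot2 x (dirv α) - c) - (dot2 x (dirv β) - c)| := abs_hatw_sub_hatw_le _ _ _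
      _ = |dot2 x (dirv α) - dot2 x (dirv β)| := by ring_nf
      _ ≤ |α - β| := abs_dot2_dirv_sub_le hx α β
      _ ≤ _ := le_mul_of_one_le_right (abs_nonneg _) hone
  · obtain ⟨hxα, hxβ⟩ := not_or.1 hxs
    rw [hatw_eq_zero (not_lt.1 fun h => hxα ⟨hx, h⟩),
      hatw_eq_zero (not_lt.1 fun h => hxβ ⟨hx, h⟩), sub_self, abs_zero]
    exact mul_nonneg (abs_nonneg _) (add_nonneg (h0 α) (h0 β))

theorem abs_hatMoment_sub_le {f : ℝ × ℝ → ℝ} (hf : IntegrableOn f unitDisk) (δ α β c : ℝ) :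
    |hatMoment δ f α c - hatMoment δ f β c| ≤
      |α - β| * ((∫ x in diskStrip α c δ, |f x|) + ∫ x in diskStrip β c δ, |f x|) := by
  have hS (γ : ℝ) : ∫ x in unitDisk, (diskStrip γ c δ).indicator (fun x => |f x|) x =
      ∫ x in diskStrip γ c δ, |f x| := by
    rw [setIntegral_indicator (measurableSet_diskStrip _ _ _),
      inter_eq_self_of_subset_right (diskStrip_subset_unitDisk _ _ _)]
  have hint (γ : ℝ) : IntegrableOn ((diskStrip γ c δ).indicator fun x => |f x|) unitDisk :=
    hf.abs.indicator (measurableSet_diskStrip _ _ _)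
  rw [hatMoment, hatMoment, ← integral_sub (integrableOn_hatw_mul hf δ α c)
    (integrableOn_hatw_mul hf δ β c), ← hS, ← hS, ← integral_add (hint α) (hint β),
    ← integral_const_mul (|α - β| : ℝ)]
  refine norm_integral_le_of_norm_le (G := ℝ) (((hint α).add (hint β)).const_mul _)
    ((ae_restrict_iff' measurableSet_unitDisk).2 (Eventually.of_forall fun x hx => ?_))
  calc ‖hatw δ (dot2 x (dirv α) - c) * f x - hatw δ (dot2 x (dirv β) - c) * f x‖
      = |hatw δ (dot2 x (dirv α) - c) - hatw δ (dot2 x (dirv β) - c)| * |f x| := by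
        rw [← sub_mul, Real.norm_eq_abs, abs_mul]
    _ ≤ |α - β| * ((diskStrip α c δ).indicator 1 x + (diskStrip β c δ).indicator 1 x) * |f x| :=
        mul_le_mul_of_nonneg_right (abs_hatw_sub_hatw_le_indicator hx δ α β c) (abs_nonneg _)
    _ = _ := by
        rw [mul_assoc, add_mul]
        congr 2 <;> exact (Set.indicator_mul_left _ 1 fun x => |f x|).symm.trans (by simp)

theorem sq_hatMoment_sub_le {f : ℝ × ℝ → ℝ} (hf : L2Img f) {δ : ℝ} (hδ : 0 ≤ δ) (α β c : ℝ) :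
    (hatMoment δ f α c - hatMoment δ f β c) ^ 2 ≤
      8 * δ * (α - β) ^ 2 *
        ((∫ x in diskStrip α c δ, f x ^ 2) + ∫ x in diskStrip β c δ, f x ^ 2) := by
  have hfin (γ : ℝ) : volume (diskStrip γ c δ) ≠ ⊤ :=
    (measure_mono (diskStrip_subset_unitDisk γ c δ)).trans_lt volume_unitDisk_lt_top |>.ne
  have hvol (γ : ℝ) : volume.real (diskStrip γ c δ) ≤ 4 * δ :=
    ENNReal.toReal_le_of_le_ofReal (by positivity) (volume_diskStrip_le γ c hδ)
  have hCS (γ : ℝ) :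
      (∫ x in diskStrip γ c δ, |f x|) ^ 2 ≤ 4 * δ * ∫ x in diskStrip γ c δ, f x ^ 2 :=
    (sq_setIntegral_abs_le (hfin γ) hf).trans
      (mul_le_mul_of_nonneg_right (hvol γ) (integral_nonneg fun _ => sq_nonneg _))
  set a := ∫ x in diskStrip α c δ, |f x|
  set b := ∫ x in diskStrip β c δ, |f x|
  calc (hatMoment δ f α c - hatMoment δ f β c) ^ 2 ≤ (|α - β| * (a + b)) ^ 2 := by
        rw [← sq_abs]
        exact pow_le_pow_left₀ (abs_nonneg _)
          (abs_hatMoment_sub_le (integrableOn_unitDisk hf) δ α β c) 2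
    _ ≤ (α - β) ^ 2 * (2 * a ^ 2 + 2 * b ^ 2) := by
        rw [mul_pow, sq_abs]
        exact mul_le_mul_of_nonneg_left (by nlinarith [sq_nonneg (a - b)]) (sq_nonneg _)
    _ ≤ _ := by nlinarith [hCS α, hCS β, sq_nonneg (α - β)]

/-! Detector cells -/

theorem card_filter_abs_sub_lt_one_le_two (s : Finset ℕ) (y : ℝ) :
    (s.filter fun p : ℕ => |y - p| < 1).card ≤ 2 := by
  calc (s.filter fun p : ℕ => |y - p| < 1).card ≤ (Finset.Icc ⌊y⌋₊ (⌊y⌋₊ + 1)).card := by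
        refine Finset.card_le_card fun p hp => ?_
        obtain ⟨h₁, h₂⟩ := abs_lt.1 (Finset.mem_filter.1 hp).2
        have hlo : ⌊y⌋₊ < p + 1 := (Nat.floor_lt' (Nat.succ_ne_zero p)).2 (by push_cast; linarith)
        have hhi : p - 1 ≤ ⌊y⌋₊ := by
          rcases Nat.eq_zero_or_pos p with rfl | hp
          · exact Nat.zero_le _
          · exact Nat.le_floor (by rw [Nat.cast_sub hp]; push_cast; linarith)
        exact Finset.mem_Icc.2 ⟨by omega, by omega⟩
    _ = 2 := by rw [Nat.card_Icc]; omega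

theorem card_filter_abs_sub_sCen_lt_le_two {δs : ℝ} (hδs : 0 < δs) (P : ℕ) (s : Finset ℕ)
    (c : ℝ) : (s.filter fun p => |c - sCen δs P p| < δs).card ≤ 2 := by
  have hscale (p : ℕ) : |c - sCen δs P p| < δs ↔ |c / δs + ((P : ℝ) + 1) / 2 - p| < 1 := by
    rw [show c - sCen δs P p = δs * (c / δs + ((P : ℝ) + 1) / 2 - p) by
      unfold sCen; field_simp; ring, abs_mul, abs_of_pos hδs, mul_lt_iff_lt_one_right hδs]
  rw [Finset.filter_congr fun p _ => hscale p]
  exact card_filter_abs_sub_lt_one_le_two s _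

theorem sum_setIntegral_diskStrip_le {f : ℝ × ℝ → ℝ} (hf : L2Img f) {δs : ℝ} (hδs : 0 < δs)
    (P : ℕ) (α : ℝ) :
    ∑ p ∈ Finset.Icc 1 P, ∫ x in diskStrip α (sCen δs P p) δs, f x ^ 2 ≤
      2 * ∫ x, f x ^ 2 := by
  have hf2 : Integrable fun x => f x ^ 2 := hf.integrable_sq
  have hint (p : ℕ) : Integrable ((diskStrip α (sCen δs P p) δs).indicator fun x => f x ^ 2) :=
    hf2.indicator (measurableSet_diskStrip _ _ _)
  simp_rw [← integral_indicator (measurableSet_diskStrip _ _ _)]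
  rw [← integral_finsetSum _ fun p _ => hint p, ← integral_const_mul]
  refine integral_mono (integrable_finsetSum _ fun p _ => hint p) (hf2.const_mul 2) fun x => ?_
  calc ∑ p ∈ Finset.Icc 1 P, (diskStrip α (sCen δs P p) δs).indicator (fun x => f x ^ 2) x
      ≤ ∑ p ∈ Finset.Icc 1 P, if |dot2 x (dirv α) - sCen δs P p| < δs then f x ^ 2 else 0 := by
        refine Finset.sum_le_sum fun p _ => ?_
        by_cases hx : x ∈ diskStrip α (sCen δs P p) δs
        · rw [Set.indicator_of_mem hx, if_pos hx.2]
        · rw [Set.indicator_of_notMem hx]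
          split_ifs <;> positivity
    _ = ((Finset.Icc 1 P).filter fun p => |dot2 x (dirv α) - sCen δs P p| < δs).card * f x ^ 2 := by
        rw [← Finset.sum_filter, Finset.sum_const, nsmul_eq_mul]
    _ ≤ 2 * f x ^ 2 := by
        gcongr
        exact_mod_cast card_filter_abs_sub_sCen_lt_le_two hδs P _ _

theorem sum_sq_hatMoment_sub_le {f : ℝ × ℝ → ℝ} (hf : L2Img f) {δs : ℝ} (hδs : 0 < δs)
    (P : ℕ) (α β : ℝ) :
    ∑ p ∈ Finset.Icc 1 P, (hatMoment δs f α (sCen δs P p) - hatMoment δs f β (sCen δs P p)) ^ 2 ≤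
      32 * δs * (α - β) ^ 2 * ∫ x, f x ^ 2 := by
  calc _ ≤ ∑ p ∈ Finset.Icc 1 P, 8 * δs * (α - β) ^ 2 *
          ((∫ x in diskStrip α (sCen δs P p) δs, f x ^ 2) +
            ∫ x in diskStrip β (sCen δs P p) δs, f x ^ 2) :=
        Finset.sum_le_sum fun p _ => sq_hatMoment_sub_le hf hδs.le α β _
    _ ≤ 8 * δs * (α - β) ^ 2 * (4 * ∫ x, f x ^ 2) := by
        rw [← Finset.mul_sum, Finset.sum_add_distrib]
        have hα := sum_setIntegral_diskStrip_le hf hδs P α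
        have hβ := sum_setIntegral_diskStrip_le hf hδs P β
        gcongr
        linarith
    _ = 32 * δs * (α - β) ^ 2 * ∫ x, f x ^ 2 := by ring

theorem sq_sum_indicator_mul {α ι : Type*} {S : ι → Set α}
    (hS : Pairwise fun i j => Disjoint (S i) (S j)) (F : Finset ι) (a : ι → ℝ) (x : α) :
    (∑ i ∈ F, (S i).indicator (fun _ => (1 : ℝ)) x * a i) ^ 2 =
      ∑ i ∈ F, (S i).indicator (fun _ => (1 : ℝ)) x * a i ^ 2 := by
  by_cases hx : ∃ i ∈ F, x ∈ S i
  · obtain ⟨i, hi, hxi⟩ := hx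
    have hzero (j : ι) (hj : j ≠ i) : (S j).indicator (fun _ => (1 : ℝ)) x = 0 :=
      Set.indicator_of_notMem (fun hxj => Set.disjoint_left.1 (hS hj) hxj hxi) _
    rw [Finset.sum_eq_single_of_mem i hi fun j _ hj => by rw [hzero j hj, zero_mul],
      Finset.sum_eq_single_of_mem i hi fun j _ hj => by rw [hzero j hj, zero_mul],
      Set.indicator_of_mem hxi]
    ring
  · push Not at hx
    have h0 (i : ι) (hi : i ∈ F) : (S i).indicator (fun _ => (1 : ℝ)) x = 0 :=
      Set.indicator_of_notMem (hx i hi) _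
    rw [Finset.sum_eq_zero fun i hi => by rw [h0 i hi, zero_mul],
      Finset.sum_eq_zero fun i hi => by rw [h0 i hi, zero_mul]]
    norm_num

theorem integral_sq_sum_indicator_mul {α ι : Type*} [MeasurableSpace α] {μ : Measure α}
    {S : ι → Set α} (hS : Pairwise fun i j => Disjoint (S i) (S j)) (hSm : ∀ i, MeasurableSet (S i))
    (hSμ : ∀ i, μ (S i) ≠ ⊤) (F : Finset ι) (a : ι → ℝ) :
    ∫ x, (∑ i ∈ F, (S i).indicator (fun _ => (1 : ℝ)) x * a i) ^ 2 ∂μ =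
      ∑ i ∈ F, μ.real (S i) * a i ^ 2 := by
  have hterm (i : ι) (x : α) : (S i).indicator (fun _ => (1 : ℝ)) x * a i ^ 2 =
      (S i).indicator (fun _ => a i ^ 2) x := by
    rw [← Set.indicator_mul_const, one_mul]
  simp_rw [sq_sum_indicator_mul hS, hterm]
  rw [integral_finsetSum _ fun i _ => (integrableOn_const (hSμ i)).integrable_indicator (hSm i)]
  simp [integral_indicator_const _ (hSm _)]

theorem sCell_pairwise_disjoint {δs : ℝ} (hδs : 0 < δs) (P : ℕ) :
    Pairwise fun p q => Disjoint (sCell δs P p) (sCell δs P q) := by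
  refine (pairwise_disjoint_on _).2 fun p q hpq => Set.disjoint_left.2 fun s hp hq => ?_
  have : (p : ℝ) + 1 ≤ q := by exact_mod_cast hpq
  have := hp.2
  have := hq.1
  unfold sCen at *
  nlinarith

/-! The angular partition -/

/-- `Θ_{i+1}` is `[cellEdge φs i, cellEdge φs (i + 1))` modulo `2π`. -/
def cellEdge (φs : ℕ → ℝ) (i : ℕ) : ℝ := (φs i + φs (i + 1)) / 2

theorem dirv_toIcoMod (a φ : ℝ) : dirv (toIcoMod Real.two_pi_pos a φ) = dirv φ := by
  rw [toIcoMod, zsmul_eq_mul]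
  simp only [dirv, Real.cos_sub_int_mul_two_pi, Real.sin_sub_int_mul_two_pi]

namespace AngGrid

variable {Q : ℕ} {φs : ℕ → ℝ}

theorem lt_succ (hg : AngGrid Q φs) {i : ℕ} (hi : i ≤ Q) : φs i < φs (i + 1) := by
  have h1 := hg.mem 1 le_rfl hg.one_le
  have hQ := hg.mem Q hg.one_le le_rfl
  rcases Nat.eq_zero_or_pos i with rfl | hi0
  · rw [hg.wrap0]; linarith [h1.1, hQ.2]
  rcases hi.lt_or_eq with hiQ | rfl
  · exact hg.mono i hi0 hiQ
  · rw [hg.wrapQ]; linarith [h1.1, hQ.2]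

theorem strictMonoOn (hg : AngGrid Q φs) : StrictMonoOn φs (Iic (Q + 1)) :=
  strictMonoOn_Iic_of_lt_succ fun _ hi => hg.lt_succ (Nat.lt_succ_iff.1 hi)

theorem cellEdge_le_cellEdge (hg : AngGrid Q φs) {i j : ℕ} (hij : i ≤ j) (hj : j ≤ Q) :
    cellEdge φs i ≤ cellEdge φs j := by
  have hmono := hg.strictMonoOn.monotoneOn
  unfold cellEdge
  gcongr
  · exact hmono (mem_Iic.2 (by omega)) (mem_Iic.2 (by omega)) hij
  · exact hmono (mem_Iic.2 (by omega)) (mem_Iic.2 (by omega)) (by omega)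

theorem cellEdge_last (hg : AngGrid Q φs) : cellEdge φs Q = cellEdge φs 0 + 2 * π := by
  unfold cellEdge
  rw [hg.wrapQ, hg.wrap0, zero_add]
  ring

theorem sub_le_of_gapLe {δφ : ℝ} (hg : AngGrid Q φs) (hgap : GapLe Q φs δφ) {i : ℕ} (hi : i ≤ Q) :
    φs (i + 1) - φs i ≤ δφ := by
  rcases Nat.eq_zero_or_pos i with rfl | hi0
  · have := hgap Q hg.one_le le_rfl
    rw [hg.wrapQ] at this
    rw [hg.wrap0]
    linarith
  · exact hgap i hi0 hi

theorem mem_angCell_succ_iff (hg : AngGrid Q φs) {i : ℕ} (hi : i < Q) (φ : ℝ) :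
    φ ∈ angCell φs (i + 1) ↔
      toIcoMod Real.two_pi_pos (cellEdge φs 0) φ ∈ Ico (cellEdge φs i) (cellEdge φs (i + 1)) := by
  change (∃ k : ℤ, φ + 2 * π * k ∈ Ico (cellEdge φs i) (cellEdge φs (i + 1))) ↔ _
  constructor
  · rintro ⟨k, hk⟩
    have hsub : Ico (cellEdge φs i) (cellEdge φs (i + 1)) ⊆
        Ico (cellEdge φs 0) (cellEdge φs 0 + 2 * π) := by
      rw [← hg.cellEdge_last]
      exact Ico_subset_Ico (hg.cellEdge_le_cellEdge (Nat.zero_le i) hi.le)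
        (hg.cellEdge_le_cellEdge hi le_rfl)
    rwa [(toIcoMod_eq_iff _).2 ⟨hsub hk, -k, by rw [zsmul_eq_mul]; push_cast; ring⟩]
  · intro h
    refine ⟨-toIcoDiv Real.two_pi_pos (cellEdge φs 0) φ, ?_⟩
    convert h using 1
    rw [toIcoMod, zsmul_eq_mul]
    push_cast
    ring

theorem exists_angCell {δφ : ℝ} (hg : AngGrid Q φs) (hgap : GapLe Q φs δφ) (φ : ℝ) :
    ∃ q₀ ∈ Finset.Icc 1 Q, φ ∈ angCell φs q₀ ∧ (∀ q ∈ Finset.Icc 1 Q, φ ∈ angCell φs q → q = q₀) ∧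
      |toIcoMod Real.two_pi_pos (cellEdge φs 0) φ - φs q₀| ≤ δφ / 2 := by
  set ψ := toIcoMod Real.two_pi_pos (cellEdge φs 0) φ
  have hψ : ψ ∈ Ico (cellEdge φs 0) (cellEdge φs Q) := by
    rw [hg.cellEdge_last]; exact toIcoMod_mem_Ico _ _ _
  obtain ⟨i, hi, hψi⟩ := mem_iUnion₂.1 (Ico_subset_biUnion_Ico Q (cellEdge φs) hψ)
  have hi : i < Q := Finset.mem_range.1 hi
  refine ⟨i + 1, Finset.mem_Icc.2 ⟨by omega, hi⟩, (hg.mem_angCell_succ_iff hi φ).2 hψi,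
    fun q hq hφq => ?_, ?_⟩
  · obtain ⟨j, rfl⟩ : ∃ j, q = j + 1 := ⟨q - 1, by grind⟩
    have hj : j < Q := by grind
    have hψj := (hg.mem_angCell_succ_iff hj φ).1 hφq
    rcases lt_trichotomy j i with h | rfl | h
    · linarith [hψj.2, hψi.1, hg.cellEdge_le_cellEdge h hi.le]
    · rfl
    · linarith [hψi.2, hψj.1, hg.cellEdge_le_cellEdge h hj.le]
  · have h₁ := hg.sub_le_of_gapLe hgap hi.le
    have h₂ := hg.sub_le_of_gapLe hgap (i := i + 1) hi
    have e₁ : cellEdge φs i = (φs i + φs (i + 1)) / 2 := rfl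
    have e₂ : cellEdge φs (i + 1) = (φs (i + 1) + φs (i + 1 + 1)) / 2 := rfl
    rw [abs_le]
    constructor <;> linarith [hψi.1, hψi.2]

end AngGrid

theorem integral_sq_radonSA_sub_radonS_le {δs δφ : ℝ} {P Q : ℕ} {φs : ℕ → ℝ} (hδs : 0 < δs)
    (hg : AngGrid Q φs) (hgap : GapLe Q φs δφ) {f : ℝ × ℝ → ℝ} (hsupp : SuppDisk f)
    (hf : L2Img f) (φ : ℝ) :
    ∫ s in Ioo (-1 : ℝ) 1, (RadonSA δs P Q φs f s φ - RadonS δs P f s φ) ^ 2 ≤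
      8 * (δφ / δs) ^ 2 * ∫ x, f x ^ 2 := by
  obtain ⟨q₀, hq₀, hmem, huniq, hψ⟩ := hg.exists_angCell hgap φ
  set ψ := toIcoMod Real.two_pi_pos (cellEdge φs 0) φ
  set a : ℕ → ℝ := fun p => hatMoment δs f (φs q₀) (sCen δs P p) - hatMoment δs f ψ (sCen δs P p)
  have hdiff (s : ℝ) : RadonSA δs P Q φs f s φ - RadonS δs P f s φ =
      (δs ^ 2)⁻¹ * ∑ p ∈ Finset.Icc 1 P, (sCell δs P p).indicator (fun _ => (1 : ℝ)) s * a p := by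
    rw [radonSA_eq_sum_hatMoment hq₀ hmem huniq, radonS_eq_sum_hatMoment hsupp hf, ← mul_sub,
      ← Finset.sum_sub_distrib]
    simp only [a, mul_sub, hatMoment, ψ, dirv_toIcoMod]
  have hcell (p : ℕ) : (volume.restrict (Ioo (-1 : ℝ) 1)).real (sCell δs P p) ≤ δs := by
    rw [measureReal_restrict_apply (by exact measurableSet_Ico)]
    refine (measureReal_mono inter_subset_left measure_Ico_lt_top.ne).trans_eq ?_
    simp [Real.volume_real_Ico, hδs.le]
  have hψ2 : (φs q₀ - ψ) ^ 2 ≤ (δφ / 2) ^ 2 := by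
    rw [← sq_abs, abs_sub_comm]
    exact pow_le_pow_left₀ (abs_nonneg _) hψ 2
  calc ∫ s in Ioo (-1 : ℝ) 1, (RadonSA δs P Q φs f s φ - RadonS δs P f s φ) ^ 2
      = ((δs ^ 2)⁻¹) ^ 2 * ∑ p ∈ Finset.Icc 1 P,
          (volume.restrict (Ioo (-1 : ℝ) 1)).real (sCell δs P p) * a p ^ 2 := by
        simp_rw [hdiff, mul_pow]
        rw [integral_const_mul, integral_sq_sum_indicator_mul (sCell_pairwise_disjoint hδs P)
          (fun _ => measurableSet_Ico) (fun _ => measure_ne_top _ _)]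
    _ ≤ ((δs ^ 2)⁻¹) ^ 2 * ∑ p ∈ Finset.Icc 1 P, δs * a p ^ 2 := by
        gcongr with p
        exact hcell p
    _ ≤ ((δs ^ 2)⁻¹) ^ 2 * (δs * (32 * δs * (δφ / 2) ^ 2 * ∫ x, f x ^ 2)) := by
        rw [← Finset.mul_sum]
        gcongr
        exact (sum_sq_hatMoment_sub_le hf hδs P _ _).trans (by gcongr)
    _ = 8 * (δφ / δs) ^ 2 * ∫ x, f x ^ 2 := by
        field_simp
        ring

theorem nSinoD_le_of_forall_le {g : ℝ → ℝ → ℝ} {B : ℝ}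
    (h : ∀ φ, ∫ s in Ioo (-1 : ℝ) 1, g s φ ^ 2 ≤ B) : nSinoD g ≤ √(2 * π * B) := by
  have hnonneg (φ : ℝ) : 0 ≤ ∫ s in Ioo (-1 : ℝ) 1, g s φ ^ 2 :=
    integral_nonneg fun _ => sq_nonneg _
  rw [nSinoD, ← Real.sqrt_eq_rpow]
  refine Real.sqrt_le_sqrt ((le_abs_self _).trans ?_)
  calc _ ≤ B * volume.real (Ioc (-π) π) := norm_setIntegral_le_of_norm_le_const measure_Ioc_lt_top
        fun φ _ => by rw [Real.norm_of_nonneg (hnonneg φ)]; exact h φ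
    _ = 2 * π * B := by rw [Real.volume_real_Ioc_of_le (by linarith [Real.pi_pos])]; ring

/-- `‖R_{δ_s,δ_φ} − R_{δ_s}‖ ≤ C δ_φ / δ_s` in the operator norm
`L²(Ω) → L²(Ω')`. -/
theorem radon_angular_discretization :
    ∃ C : ℝ, 0 < C ∧ ∀ (δs δφ : ℝ) (P Q : ℕ) (φs : ℕ → ℝ),
      0 < δs → 0 < δφ → CoversI δs P → AngGrid Q φs → GapLe Q φs δφ →
      ∀ f : ℝ × ℝ → ℝ, SuppDisk f → L2Img f →
        nSinoD (fun s φ => RadonSA δs P Q φs f s φ - RadonS δs P f s φ) ≤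
          C * (δφ / δs) * nImg f := by
  refine ⟨4 * √π, by positivity, fun δs δφ P Q φs hδs hδφ _ hg hgap f hsupp hf => ?_⟩
  calc _ ≤ √(2 * π * (8 * (δφ / δs) ^ 2 * ∫ x, f x ^ 2)) :=
        nSinoD_le_of_forall_le (integral_sq_radonSA_sub_radonS_le hδs hg hgap hsupp hf)
    _ = 4 * √π * (δφ / δs) * nImg f := by
        rw [nImg, ← Real.sqrt_eq_rpow, show 2 * π * (8 * (δφ / δs) ^ 2 * ∫ x, f x ^ 2) =
          (4 * (δφ / δs)) ^ 2 * π * ∫ x, f x ^ 2 by ring, Real.sqrt_mul' _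
          (integral_nonneg fun _ => sq_nonneg _), Real.sqrt_mul' _ Real.pi_pos.le,
          Real.sqrt_sq (by positivity)]
        ring

end
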